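/- arXiv:2602.08232 — 3 statements merged into one kernel-verified Lean document; each statement's English description precedes it below -/
import Mathlib

section
/- For any sequence of matrices G_1,...,G_T in R^{m×n}, defining M_t = Σ_{s=1}^t G_s G_s^T, it holds that Σ_{t=1}^T tr(G_t^T M_t^{-1/2} G_t) ≤ 2 tr(M_T^{1/2}), where M_t^{-1/2} denotes the Moore-Penrose pseudoinverse square root (or assume each M_t is positive definite). -/
/-
Write `S = M_t^{1/2}` and `C = M_{t-1}^{1/2}`. Since `(C - S) S⁻¹ (C - S)` is positive
semidefinite, its trace `tr(S⁻¹ C²) - 2 tr C + tr S` is nonnegative, i.e.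
`tr(S⁻¹ (M_t - M_{t-1})) = tr S - tr(S⁻¹ C²) ≤ 2 tr S - 2 tr C`.
The `t`-th summand equals `tr(S⁻¹ G_t G_tᵀ) = tr(S⁻¹ (M_t - M_{t-1}))`, so the sum
telescopes to at most `2 tr M_T^{1/2} - 2 tr M_0^{1/2} ≤ 2 tr M_T^{1/2}`.
-/

open Matrix Finset
open scoped Classical

noncomputable def psqrt {m : ℕ} (A : Matrix (Fin m) (Fin m) ℝ) : Matrix (Fin m) (Fin m) ℝ :=
  if h : A.PosSemidef then
    (h.1.eigenvectorUnitary : Matrix (Fin m) (Fin m) ℝ) * diagonal (Real.sqrt ∘ h.1.eigenvalues) *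
      (star h.1.eigenvectorUnitary : Matrix (Fin m) (Fin m) ℝ)
  else 0

open scoped MatrixOrder

lemma psqrt_eq_sqrt {m : ℕ} {A : Matrix (Fin m) (Fin m) ℝ} (hA : A.PosSemidef) :
    psqrt A = CFC.sqrt A := by
  rw [psqrt, dif_pos hA, CFC.sqrt_eq_cfc, cfc_nnreal_eq_real _ A, hA.1.cfc_eq, IsHermitian.cfc,
    Unitary.conjStarAlgAut_apply]
  congr 3
  funext i
  simp [max_eq_left (hA.eigenvalues_nonneg i)]

section TracePotential

variable {n : Type*} [Fintype n] [DecidableEq n]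

lemma two_mul_trace_le_trace_inv_mul_mul_add_trace {S C : Matrix n n ℝ} (hS : S.PosDef)
    (hC : C.IsHermitian) : 2 * C.trace ≤ (S⁻¹ * (C * C)).trace + S.trace := by
  have hsq : 0 ≤ ((C - S)ᴴ * S⁻¹ * (C - S)).trace :=
    (hS.inv.posSemidef.conjTranspose_mul_mul_same (C - S)).trace_nonneg
  have hdet : IsUnit S.det := (isUnit_iff_isUnit_det S).mp hS.isUnit
  have hexp : (C - S)ᴴ * S⁻¹ * (C - S) =
      C * S⁻¹ * C - C * (S⁻¹ * S) - S * S⁻¹ * C + S * (S⁻¹ * S) := by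
    rw [conjTranspose_sub, hC.eq, hS.isHermitian.eq]
    noncomm_ring
  rw [hexp, nonsing_inv_mul S hdet, mul_nonsing_inv S hdet, mul_one, one_mul, mul_one, trace_add,
    trace_sub, trace_sub, trace_mul_cycle, trace_mul_comm (C * C)] at hsq
  linarith

lemma trace_inv_sqrt_mul_sub_le {A B : Matrix n n ℝ} (hA : A.PosSemidef) (hB : B.PosDef) :
    ((CFC.sqrt B)⁻¹ * (B - A)).trace ≤ 2 * (CFC.sqrt B).trace - 2 * (CFC.sqrt A).trace := by
  have hS : (CFC.sqrt B).PosDef := hB.isStrictlyPositive.sqrt.posDef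
  have hC : (CFC.sqrt A).IsHermitian := (CFC.sqrt_nonneg A).posSemidef.isHermitian
  have key := two_mul_trace_le_trace_inv_mul_mul_add_trace hS hC
  rw [CFC.sqrt_mul_sqrt_self A hA.nonneg] at key
  have hSB : (CFC.sqrt B)⁻¹ * B = CFC.sqrt B := calc
    (CFC.sqrt B)⁻¹ * B = (CFC.sqrt B)⁻¹ * (CFC.sqrt B * CFC.sqrt B) := by
      rw [CFC.sqrt_mul_sqrt_self B hB.posSemidef.nonneg]
    _ = CFC.sqrt B := by
      rw [← Matrix.mul_assoc, nonsing_inv_mul _ ((isUnit_iff_isUnit_det _).mp hS.isUnit),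
        one_mul]
  rw [Matrix.mul_sub, trace_sub, hSB]
  linarith

end TracePotential

theorem Finset.sum_Icc_one_le_sub {α : Type*} [AddCommGroup α] [PartialOrder α]
    [IsOrderedAddMonoid α] {a f : ℕ → α} {T : ℕ}
    (h : ∀ t < T, a (t + 1) ≤ f (t + 1) - f t) :
    ∑ t ∈ Icc 1 T, a t ≤ f T - f 0 := by
  induction T with
  | zero => simp
  | succ T ih =>
    rw [sum_Icc_succ_top (by omega), ← sub_add_sub_cancel (f (T + 1)) (f T) (f 0),
      add_comm (f (T + 1) - f T)]
    exact add_le_add (ih fun t ht => h t (by omega)) (h T T.lt_succ_self)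

/-- trace potential lemma: for matrices `G 1, …, G T` with
`M t = ∑_{s=1}^t G s * (G s)ᵀ` positive definite, one has
`∑_{t=1}^T tr((G t)ᵀ (M t)^{-1/2} (G t)) ≤ 2 tr((M T)^{1/2})`. -/
theorem stmt0 {m n T : ℕ} (G : ℕ → Matrix (Fin m) (Fin n) ℝ)
    (M : ℕ → Matrix (Fin m) (Fin m) ℝ)
    (hM : ∀ t, M t = ∑ s ∈ Finset.Icc 1 t, G s * (G s)ᵀ)
    (hpd : ∀ t, 1 ≤ t → t ≤ T → (M t).PosDef) :
    ∑ t ∈ Finset.Icc 1 T, ((G t)ᵀ * (psqrt (M t))⁻¹ * G t).trace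
      ≤ 2 * (psqrt (M T)).trace := by
  have hMpsd (t : ℕ) : (M t).PosSemidef := hM t ▸ posSemidef_sum _ fun s _ => by
    simpa only [conjTranspose_eq_transpose_of_trivial] using posSemidef_self_mul_conjTranspose (G s)
  have hstep (t : ℕ) (ht : t < T) : ((G (t + 1))ᵀ * (psqrt (M (t + 1)))⁻¹ * G (t + 1)).trace
      ≤ 2 * (psqrt (M (t + 1))).trace - 2 * (psqrt (M t)).trace := by
    have hdiff : M (t + 1) - M t = G (t + 1) * (G (t + 1))ᵀ := by
      rw [hM, hM, sum_Icc_succ_top (by omega), add_sub_cancel_left]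
    rw [trace_mul_comm, ← Matrix.mul_assoc, trace_mul_comm, ← hdiff,
      psqrt_eq_sqrt (hMpsd t), psqrt_eq_sqrt (hMpsd (t + 1))]
    exact trace_inv_sqrt_mul_sub_le (hMpsd t) (hpd (t + 1) (by omega) ht)
  have hM0 : 0 ≤ (psqrt (M 0)).trace := by
    rw [psqrt_eq_sqrt (hMpsd 0)]
    exact (CFC.sqrt_nonneg _).posSemidef.trace_nonneg
  calc _ ≤ 2 * (psqrt (M T)).trace - 2 * (psqrt (M 0)).trace :=
        Finset.sum_Icc_one_le_sub (f := fun t => 2 * (psqrt (M t)).trace) hstep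
    _ ≤ 2 * (psqrt (M T)).trace := by linarith
end

section
/- For any S ∈ R^{m×n} and PSD matrix L ∈ S₊^m, the hyperbolic smoothing Ψ̃^H(S; L) = tr(√(S S^T + L L^T)) equals the nuclear norm of the augmented matrix [S L] ∈ R^{m×(n+m)}, i.e., Ψ̃^H(S; L) = ||[S L]||_*. In particular Ψ̃^H(S; 0) = ||S||_* and Ψ̃^H(S; L) ≥ ||S||_*. -/
open Matrix Finset
open scoped Classical

noncomputable def nuclearNorm {m : ℕ} {n : Type*} [Fintype n]
    (A : Matrix (Fin m) n ℝ) : ℝ :=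
  (psqrt (A * Aᵀ)).trace

/-- The hyperbolic smoothing `Ψ̃^H(S; L) = tr(√(S Sᵀ + L Lᵀ))`. -/
noncomputable def psiH {m n : ℕ} (S : Matrix (Fin m) (Fin n) ℝ)
    (L : Matrix (Fin m) (Fin m) ℝ) : ℝ :=
  (psqrt (S * Sᵀ + L * Lᵀ)).trace

/-!
Since `[S L] [S L]ᵀ = S Sᵀ + L Lᵀ`, the identity is immediate, and the inequality follows from
`S Sᵀ ≤ S Sᵀ + L Lᵀ` by operator monotonicity of the square root. Mathlib proves that
monotonicity in complex C⋆-algebras, so we transport it to real matrices along `ℝ → ℂ`, which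
preserves positivity and, by uniqueness of positive square roots, commutes with `CFC.sqrt`.
-/

open scoped MatrixOrder Matrix.Norms.L2Operator ComplexOrder

namespace Matrix

variable {n : Type*} [Fintype n]

lemma posSemidef_mul_transpose_self {m : Type*} [Fintype m] (A : Matrix n m ℝ) :
    (A * Aᵀ).PosSemidef := by
  simpa using posSemidef_self_mul_conjTranspose A

lemma trace_le_trace_of_le {𝕜 : Type*} [RCLike 𝕜] {A B : Matrix n n 𝕜} (h : A ≤ B) :
    A.trace ≤ B.trace := by
  simpa [trace_sub] using (le_iff.mp h).trace_nonneg

variable [DecidableEq n]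

lemma posSemidef_mapMatrix_ofReal_iff {A : Matrix n n ℝ} :
    (Complex.ofRealHom.mapMatrix A).PosSemidef ↔ A.PosSemidef := by
  constructor
  · rw [posSemidef_iff_dotProduct_mulVec, posSemidef_iff_dotProduct_mulVec]
    rintro ⟨hherm, hquad⟩
    refine ⟨?_, fun x => ?_⟩
    · ext i j
      simpa using congr_fun₂ hherm i j
    · rw [← Complex.zero_le_real]
      convert hquad (Complex.ofReal ∘ x)
      simp [RingHom.mapMatrix_apply, dotProduct, mulVec]
  · intro hA
    have hsqrt : (Complex.ofRealHom.mapMatrix (CFC.sqrt A))ᴴ =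
        Complex.ofRealHom.mapMatrix (CFC.sqrt A) := by
      rw [RingHom.mapMatrix_apply, ← conjTranspose_map _ fun x => by simp,
        (CFC.sqrt_nonneg A).posSemidef.isHermitian.eq]
    have := posSemidef_conjTranspose_mul_self (Complex.ofRealHom.mapMatrix (CFC.sqrt A))
    rwa [hsqrt, ← map_mul, CFC.sqrt_mul_sqrt_self A hA.nonneg] at this

lemma mapMatrix_ofReal_cfcSqrt {A : Matrix n n ℝ} (hA : A.PosSemidef) :
    Complex.ofRealHom.mapMatrix (CFC.sqrt A) = CFC.sqrt (Complex.ofRealHom.mapMatrix A) := by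
  symm
  rw [CFC.sqrt_eq_iff _ _ (posSemidef_mapMatrix_ofReal_iff.mpr hA).nonneg
    (posSemidef_mapMatrix_ofReal_iff.mpr (CFC.sqrt_nonneg A).posSemidef).nonneg, ← map_mul,
    CFC.sqrt_mul_sqrt_self A hA.nonneg]

lemma cfcSqrt_le_cfcSqrt {A B : Matrix n n ℝ} (hA : 0 ≤ A) (hAB : A ≤ B) :
    CFC.sqrt A ≤ CFC.sqrt B := by
  have hB : 0 ≤ B := hA.trans hAB
  rw [le_iff, ← posSemidef_mapMatrix_ofReal_iff, map_sub, mapMatrix_ofReal_cfcSqrt hA.posSemidef,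
    mapMatrix_ofReal_cfcSqrt hB.posSemidef, ← le_iff]
  refine CFC.sqrt_le_sqrt _ _ ?_
  rw [le_iff, ← map_sub, posSemidef_mapMatrix_ofReal_iff]
  exact hAB

end Matrix

lemma psqrt_eq_cfcSqrt {m : ℕ} (A : Matrix (Fin m) (Fin m) ℝ) : psqrt A = CFC.sqrt A := by
  by_cases hA : A.PosSemidef
  · rw [psqrt, dif_pos hA, CFC.sqrt_eq_real_sqrt A hA.nonneg, cfcₙ_eq_cfc, hA.1.cfc_eq]
    rfl
  · rw [psqrt, dif_neg hA, CFC.sqrt_of_not_nonneg]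
    exact mt LE.le.posSemidef hA

lemma psiH_eq_nuclearNorm_fromCols {m n : ℕ} (S : Matrix (Fin m) (Fin n) ℝ)
    (L : Matrix (Fin m) (Fin m) ℝ) : psiH S L = nuclearNorm (fromCols S L) := by
  rw [psiH, nuclearNorm, transpose_fromCols, fromCols_mul_fromRows]

lemma psiH_zero_right {m n : ℕ} (S : Matrix (Fin m) (Fin n) ℝ) : psiH S 0 = nuclearNorm S := by
  simp [psiH, nuclearNorm]

lemma nuclearNorm_le_psiH {m n : ℕ} (S : Matrix (Fin m) (Fin n) ℝ)
    (L : Matrix (Fin m) (Fin m) ℝ) : nuclearNorm S ≤ psiH S L := by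
  rw [psiH, nuclearNorm, psqrt_eq_cfcSqrt, psqrt_eq_cfcSqrt]
  refine trace_le_trace_of_le (cfcSqrt_le_cfcSqrt (posSemidef_mul_transpose_self S).nonneg ?_)
  exact le_add_of_nonneg_right (posSemidef_mul_transpose_self L).nonneg

theorem stmt10_general {m n : ℕ} (S : Matrix (Fin m) (Fin n) ℝ)
    (L : Matrix (Fin m) (Fin m) ℝ) :
    psiH S L = nuclearNorm (Matrix.fromCols S L) ∧
    psiH S 0 = nuclearNorm S ∧
    nuclearNorm S ≤ psiH S L :=
  ⟨psiH_eq_nuclearNorm_fromCols S L, psiH_zero_right S, nuclearNorm_le_psiH S L⟩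

/-- the hyperbolic smoothing equals the nuclear norm of the
augmented matrix `[S L]`, i.e. `Ψ̃^H(S; L) = ‖[S L]‖_*`; in particular
`Ψ̃^H(S; 0) = ‖S‖_*` and `Ψ̃^H(S; L) ≥ ‖S‖_*` for PSD `L`. -/
theorem stmt10 {m n : ℕ} (S : Matrix (Fin m) (Fin n) ℝ)
    (L : Matrix (Fin m) (Fin m) ℝ) (hL : L.PosSemidef) :
    psiH S L = nuclearNorm (Matrix.fromCols S L) ∧
    psiH S 0 = nuclearNorm S ∧
    nuclearNorm S ≤ psiH S L :=
  stmt10_general S L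
end

section
/- Let {q_s}_{s=1}^t be the geometric weights q_s = (1−β)β^{t−s}/(1−β^t) for β ∈ (0,1), let W_1,...,W_t be points in a normed space with E||W_s − W_{s−1}|| ≤ D, let Y be a random point equal to W_s with probability q_s, and let W̄ = Σ_s q_s W_s. Then E||Y − W̄|| ≤ 2βD/(1−β). -/
open Finset

private lemma sum_id_mul_pow_identity (β : ℝ) : ∀ t : ℕ,
    (1 - β) * ∑ k ∈ range t, (k : ℝ) * β ^ k
      = (∑ k ∈ range t, β ^ k) - 1 + (1 - (t : ℝ)) * β ^ t := by
  intro t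
  induction t with
  | zero => simp
  | succ n ih =>
    rw [Finset.sum_range_succ, Finset.sum_range_succ (f := fun k => β ^ k)]
    push_cast
    linear_combination ih

private lemma key_sum (β : ℝ) (hβ0 : 0 < β) (hβ1 : β < 1) (t : ℕ) :
    (1 - β) ^ 2 * ∑ k ∈ range t, (k : ℝ) * β ^ k ≤ β * (1 - β ^ t) := by
  have hid := sum_id_mul_pow_identity β t
  have hgeo : (∑ i ∈ range t, β ^ i) * (β - 1) = β ^ t - 1 := geom_sum_mul β t
  have hβt : (0:ℝ) ≤ β ^ t := by positivity
  have ht0 : (0:ℝ) ≤ (t : ℝ) := Nat.cast_nonneg t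
  nlinarith [mul_nonneg (mul_nonneg (le_of_lt (by linarith : (0:ℝ) < 1 - β)) hβt) ht0,
    mul_le_of_le_one_right hβt hβ1.le]

/-- with geometric weights `q s = (1−β)β^{t−s}/(1−β^t)`, points
`W 1, …, W t` in a normed space with consecutive increments bounded by `D`, a random
point `Y` equal to `W s` with probability `q s`, and `W̄ = ∑_s q s • W s`, one has
`E‖Y − W̄‖ = ∑_s q s ‖W s − W̄‖ ≤ 2βD/(1−β)`. -/
theorem stmt17 {E : Type*} [NormedAddCommGroup E] [NormedSpace ℝ E]
    (t : ℕ) (ht : 1 ≤ t) (β : ℝ) (hβ0 : 0 < β) (hβ1 : β < 1)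
    (D : ℝ) (hD : 0 ≤ D) (W : ℕ → E)
    (hW : ∀ s, 2 ≤ s → s ≤ t → ‖W s - W (s - 1)‖ ≤ D)
    (q : ℕ → ℝ) (hq : ∀ s, q s = (1 - β) * β ^ (t - s) / (1 - β ^ t)) :
    ∑ s ∈ Finset.Icc 1 t, q s * ‖W s - ∑ r ∈ Finset.Icc 1 t, q r • W r‖
      ≤ 2 * β * D / (1 - β) := by
  have hβ' : (0:ℝ) < 1 - β := by linarith
  have hQ : 0 < 1 - β ^ t := by
    have : β ^ t < 1 := pow_lt_one₀ hβ0.le hβ1 (by omega)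
    linarith
  have hqnn : ∀ s, 0 ≤ q s := by
    intro s; rw [hq]; positivity
  -- reindexing lemma
  have hre : ∀ f : ℕ → ℝ, ∑ s ∈ Icc 1 t, f (t - s) = ∑ k ∈ range t, f k := by
    intro f
    refine Finset.sum_nbij' (fun s => t - s) (fun k => t - k) ?_ ?_ ?_ ?_ ?_
    · intro a ha; rw [Finset.mem_Icc] at ha; simp only [Finset.mem_range]; omega
    · intro a ha; rw [Finset.mem_range] at ha; simp only [Finset.mem_Icc]; omega
    · intro a ha; rw [Finset.mem_Icc] at ha; show t - (t - a) = a; omega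
    · intro a ha; rw [Finset.mem_range] at ha; show t - (t - a) = a; omega
    · intro a ha; rfl
  have hsumq : ∑ s ∈ Icc 1 t, q s = 1 := by
    have h1 : ∑ s ∈ Icc 1 t, q s
        = ∑ k ∈ range t, (1 - β) * β ^ k / (1 - β ^ t) := by
      rw [← hre (fun k => (1 - β) * β ^ k / (1 - β ^ t))]
      exact Finset.sum_congr rfl (fun s _ => hq s)
    rw [h1, ← Finset.sum_div, ← Finset.mul_sum, geom_sum_eq hβ1.ne t]
    have h2 : β - 1 ≠ 0 := by linarith
    have h3 : 1 - β ^ t ≠ 0 := ne_of_gt hQ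
    field_simp
    ring
  -- distance to W t
  have hdist' : ∀ k i, 1 ≤ i → i + k = t → ‖W i - W t‖ ≤ D * k := by
    intro k
    induction k with
    | zero =>
      intro i h1 h2
      have : i = t := by omega
      subst this; simp
    | succ k ih =>
      intro i h1 h2
      have h3 : ‖W (i + 1) - W t‖ ≤ D * k := ih (i + 1) (by omega) (by omega)
      have h4 : ‖W (i + 1) - W i‖ ≤ D := by
        have := hW (i + 1) (by omega) (by omega)
        simpa using this
      have h5 : W i - W t = (W i - W (i + 1)) + (W (i + 1) - W t) := by abel
      calc ‖W i - W t‖ ≤ ‖W i - W (i + 1)‖ + ‖W (i + 1) - W t‖ := by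
            rw [h5]; exact norm_add_le _ _
        _ ≤ D + D * k := by rw [norm_sub_rev]; exact add_le_add h4 h3
        _ = D * (k + 1 : ℕ) := by push_cast; ring
  have hdist : ∀ i ∈ Icc 1 t, ‖W i - W t‖ ≤ D * ((t : ℝ) - i) := by
    intro i hi
    rw [Finset.mem_Icc] at hi
    have := hdist' (t - i) i hi.1 (by omega)
    calc ‖W i - W t‖ ≤ D * ((t - i : ℕ) : ℝ) := this
      _ = D * ((t : ℝ) - i) := by
          congr 1
          have : ((t - i : ℕ) : ℝ) = (t : ℝ) - i := by
            push_cast [Nat.cast_sub hi.2]; ring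
          rw [this]
  set Wb : E := ∑ r ∈ Icc 1 t, q r • W r with hWb
  set T : ℝ := ∑ j ∈ Icc 1 t, q j * ‖W j - W t‖ with hT
  have hTnn : 0 ≤ T := Finset.sum_nonneg fun j _ =>
    mul_nonneg (hqnn j) (norm_nonneg _)
  have step1 : ∀ i, ‖W i - Wb‖ ≤ ‖W i - W t‖ + T := by
    intro i
    have hWi : W i = ∑ j ∈ Icc 1 t, q j • W i := by
      rw [← Finset.sum_smul, hsumq, one_smul]
    have hrepr : W i - Wb = ∑ j ∈ Icc 1 t, q j • (W i - W j) := by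
      calc W i - Wb = ∑ j ∈ Icc 1 t, (q j • W i - q j • W j) := by
            rw [Finset.sum_sub_distrib, ← hWi, hWb]
        _ = ∑ j ∈ Icc 1 t, q j • (W i - W j) := by
            exact Finset.sum_congr rfl fun j _ => (smul_sub _ _ _).symm
    calc ‖W i - Wb‖ ≤ ∑ j ∈ Icc 1 t, ‖q j • (W i - W j)‖ := by
          rw [hrepr]; exact norm_sum_le _ _
      _ = ∑ j ∈ Icc 1 t, q j * ‖W i - W j‖ := by
          refine Finset.sum_congr rfl fun j _ => ?_
          rw [norm_smul, Real.norm_of_nonneg (hqnn j)]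
      _ ≤ ∑ j ∈ Icc 1 t, q j * (‖W i - W t‖ + ‖W j - W t‖) := by
          refine Finset.sum_le_sum fun j _ => ?_
          refine mul_le_mul_of_nonneg_left ?_ (hqnn j)
          calc ‖W i - W j‖ = ‖(W i - W t) + (W t - W j)‖ := by abel_nf
            _ ≤ ‖W i - W t‖ + ‖W t - W j‖ := norm_add_le _ _
            _ = ‖W i - W t‖ + ‖W j - W t‖ := by rw [norm_sub_rev (W t)]
      _ = ‖W i - W t‖ + T := by
          simp only [mul_add, Finset.sum_add_distrib, ← Finset.sum_mul, hsumq,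
            one_mul, hT]
  -- the core weighted-distance sum
  have hcore : ∑ i ∈ Icc 1 t, q i * ((t : ℝ) - i) ≤ β / (1 - β) := by
    have h1 : ∑ i ∈ Icc 1 t, q i * ((t : ℝ) - i)
        = ∑ k ∈ range t, (1 - β) * β ^ k / (1 - β ^ t) * (k : ℝ) := by
      rw [← hre (fun k => (1 - β) * β ^ k / (1 - β ^ t) * (k : ℝ))]
      refine Finset.sum_congr rfl fun i hi => ?_
      rw [Finset.mem_Icc] at hi
      rw [hq]
      congr 1
      push_cast [Nat.cast_sub hi.2]
      ring
    rw [h1]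
    have h2 : ∑ k ∈ range t, (1 - β) * β ^ k / (1 - β ^ t) * (k : ℝ)
        = (1 - β) * (∑ k ∈ range t, (k : ℝ) * β ^ k) / (1 - β ^ t) := by
      rw [Finset.mul_sum, Finset.sum_div]
      exact Finset.sum_congr rfl fun k _ => by ring
    rw [h2, div_le_div_iff₀ hQ hβ']
    have := key_sum β hβ0 hβ1 t
    nlinarith [this]
  have hTle : T ≤ D * (β / (1 - β)) := by
    calc T ≤ ∑ j ∈ Icc 1 t, q j * (D * ((t : ℝ) - j)) := by
          refine Finset.sum_le_sum fun j hj => ?_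
          exact mul_le_mul_of_nonneg_left (hdist j hj) (hqnn j)
      _ = D * ∑ j ∈ Icc 1 t, q j * ((t : ℝ) - j) := by
          rw [Finset.mul_sum]; exact Finset.sum_congr rfl fun j _ => by ring
      _ ≤ D * (β / (1 - β)) := by
          exact mul_le_mul_of_nonneg_left hcore hD
  calc ∑ s ∈ Icc 1 t, q s * ‖W s - Wb‖
      ≤ ∑ s ∈ Icc 1 t, q s * (‖W s - W t‖ + T) := by
        refine Finset.sum_le_sum fun s _ => ?_
        exact mul_le_mul_of_nonneg_left (step1 s) (hqnn s)
    _ = T + T := by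
        simp only [mul_add, Finset.sum_add_distrib, ← Finset.sum_mul, hsumq,
          one_mul, hT]
    _ ≤ D * (β / (1 - β)) + D * (β / (1 - β)) := add_le_add hTle hTle
    _ = 2 * β * D / (1 - β) := by field_simp; ring
end
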